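/- Optimality of the lossy lower bound: for every n ≥ 1, there exists a lossy execution of the broadcast protocol P_n covering {☺} whose size is exactly n + 1 nodes (with the static communication topology in which one designated node is connected to each of the other n nodes). -/

import Mathlib

/-- A broadcast protocol over finite state set `Q` and finite message alphabet `M`.
`I` is the set of initial states, `br q m q'` means `(q, !!m, q') ∈ Δ` (a broadcast
transition) and `rcv q m q'` means `(q, ??m, q') ∈ Δ` (a reception transition).
The protocol is complete for receptions. -/
structure BroadcastProtocol (Q M : Type) [Fintype Q] [DecidableEq Q] [Fintype M] where
  I : Finset Q
  br : Q → M → Q → Prop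
  rcv : Q → M → Q → Prop
  complete : ∀ q m, ∃ q', rcv q m q'

section Execs
variable {Q M : Type} [Fintype Q] [DecidableEq Q] [Fintype M]

/-- A lossy execution of length `r` over the finite node type `ν`: the communication
topology `E` is fixed throughout, and in the `i`-th step node `sender i` broadcasts
message `msg i`, which is lost (reaching no node) iff `lost i = true`. -/
structure LExec (P : BroadcastProtocol Q M) (ν : Type) [Fintype ν] [DecidableEq ν]
    (r : ℕ) where
  lab : Fin (r + 1) → ν → Q
  E : ν → ν → Prop
  E_symm : Symmetric E
  E_irrefl : Irreflexive E
  sender : Fin r → ν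
  msg : Fin r → M
  lost : Fin r → Bool
  init : ∀ v, lab 0 v ∈ P.I
  step_br : ∀ i : Fin r, P.br (lab i.castSucc (sender i)) (msg i) (lab i.succ (sender i))
  step_lost : ∀ i : Fin r, lost i = true → ∀ v, v ≠ sender i →
    lab i.succ v = lab i.castSucc v
  step_real : ∀ i : Fin r, lost i = false → ∀ v, v ≠ sender i →
    (E (sender i) v → P.rcv (lab i.castSucc v) (msg i) (lab i.succ v)) ∧
    (¬ E (sender i) v → lab i.succ v = lab i.castSucc v)

namespace LExec

variable {P : BroadcastProtocol Q M} {ν : Type} [Fintype ν] [DecidableEq ν] {r : ℕ}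

/-- Labelling of the last configuration. -/
def lastLab (ρ : LExec P ν r) : ν → Q := ρ.lab (Fin.last r)

/-- The execution covers `F` if a node of the last configuration is labelled in `F`. -/
def Covers (ρ : LExec P ν r) (F : Set Q) : Prop := ∃ v, ρ.lastLab v ∈ F

/-- The active length of node `v`: the number of broadcasts (lost or not) of `v`. -/
def activeLen (ρ : LExec P ν r) (v : ν) : ℕ :=
  (Finset.univ.filter fun i : Fin r => ρ.sender i = v).card

/-- The real active length of node `v`: the number of non-lost broadcasts of `v`. -/
def realActiveLen (ρ : LExec P ν r) (v : ν) : ℕ :=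
  (Finset.univ.filter fun i : Fin r => ρ.sender i = v ∧ ρ.lost i = false).card

end LExec

end Execs
/- ## The protocol P_n (succinctness) -/

abbrev PnQ (n : ℕ) := Fin (2 * n + 1) ⊕ (Fin n ⊕ Unit)
abbrev PnM (n : ℕ) := Option (Fin n)

def PnBr (n : ℕ) : PnQ n → PnM n → PnQ n → Prop
  | .inl k, none, q' => (k : ℕ) = 0 ∧ q' = .inl k
  | .inl k, some i, q' =>
      (k : ℕ) = 2 * (i : ℕ) + 1 ∧ ∃ h : (k : ℕ) + 1 < 2 * n + 1, q' = .inl ⟨(k : ℕ) + 1, h⟩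
  | _, _, _ => False

def PnRcv (n : ℕ) : PnQ n → PnM n → PnQ n → Prop
  | .inl k, none, q' =>
      ((k : ℕ) % 2 = 0 ∧ ∃ _h : (k : ℕ) < 2 * n, q' = Sum.inl ⟨(k : ℕ) + 1, by omega⟩)
      ∨ (¬ ((k : ℕ) % 2 = 0 ∧ (k : ℕ) < 2 * n) ∧ q' = .inl k)
  | .inl k, some i, q' =>
      ((k : ℕ) = 0 ∧ q' = .inr (.inr ()))
      ∨ ((k : ℕ) = 0 ∧ (i : ℕ) = 0 ∧ q' = .inr (.inl ⟨0, Fin.pos i⟩))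
      ∨ ((k : ℕ) ≠ 0 ∧ q' = .inl k)
  | .inr (.inl j), none, q' => q' = .inr (.inl j)
  | .inr (.inl j), some i, q' =>
      ((i : ℕ) = (j : ℕ) + 1 ∧ ∃ h : (j : ℕ) + 1 < n, q' = .inr (.inl ⟨(j : ℕ) + 1, h⟩))
      ∨ ((i : ℕ) ≠ (j : ℕ) + 1 ∧ q' = .inr (.inl j))
  | .inr (.inr _), _, q' => q' = .inr (.inr ())

def PnProt (n : ℕ) : BroadcastProtocol (PnQ n) (PnM n) where
  I := {Sum.inl (0 : Fin (2 * n + 1))}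
  br := PnBr n
  rcv := PnRcv n
  complete := by
    rintro (k | j | u) (_ | i)
    · by_cases h : (k : ℕ) % 2 = 0 ∧ (k : ℕ) < 2 * n
      · exact ⟨Sum.inl ⟨(k : ℕ) + 1, by omega⟩, Or.inl ⟨h.1, h.2, rfl⟩⟩
      · exact ⟨Sum.inl k, Or.inr ⟨h, rfl⟩⟩
    · by_cases h : (k : ℕ) = 0
      · exact ⟨Sum.inr (Sum.inr ()), Or.inl ⟨h, rfl⟩⟩
      · exact ⟨Sum.inl k, Or.inr (Or.inr ⟨h, rfl⟩)⟩
    · exact ⟨Sum.inr (Sum.inl j), rfl⟩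
    · by_cases h : (i : ℕ) = (j : ℕ) + 1
      · exact ⟨Sum.inr (Sum.inl ⟨(j : ℕ) + 1, by have := i.isLt; omega⟩),
          Or.inl ⟨h, by have := i.isLt; omega, rfl⟩⟩
      · exact ⟨Sum.inr (Sum.inl j), Or.inr ⟨h, rfl⟩⟩
    · exact ⟨Sum.inr (Sum.inr ()), rfl⟩
    · exact ⟨Sum.inr (Sum.inr ()), rfl⟩

def PnSmiley (n : ℕ) (hn : 1 ≤ n) : PnQ n := Sum.inr (Sum.inl ⟨n - 1, by omega⟩)

/-!
Take the star whose centre is node `0` and whose leaf `i < n` is node `i + 1`. The centre stays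
in `q₀` and repeatedly broadcasts `a` for real, which moves every leaf in an even state `q_{2j}`
(`j < n`) to `q_{2j+1}`. Between two of these broadcasts, every leaf that has not yet reached its
goal `q_{2i+1}` advances to the next even state by broadcasting `b_{j+1}`; these broadcasts are
lost, so the centre never hears them. Once every leaf `i` sits in `q_{2i+1}`, the leaves broadcast
`b₁, …, bₙ` for real in this order, and the centre, their only neighbour, climbs
`q₀ → r₁ → ⋯ → rₙ = ☺`.
-/

namespace BroadcastProtocol

variable {Q M : Type} [Fintype Q] [DecidableEq Q] [Fintype M] (P : BroadcastProtocol Q M)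
  {ν : Type} (E : ν → ν → Prop)

def LossyStep (γ γ' : ν → Q) : Prop :=
  ∃ v m, P.br (γ v) m (γ' v) ∧
    ((∀ w, w ≠ v → γ' w = γ w) ∨
      ∀ w, w ≠ v → (E v w → P.rcv (γ w) m (γ' w)) ∧ (¬ E v w → γ' w = γ w))

inductive LossyReachable : (ν → Q) → Prop
  | init {γ : ν → Q} : (∀ v, γ v ∈ P.I) → LossyReachable γ
  | step {γ γ' : ν → Q} : LossyReachable γ → P.LossyStep E γ γ' → LossyReachable γ'

end BroadcastProtocol

namespace LExec

variable {Q M : Type} [Fintype Q] [DecidableEq Q] [Fintype M] {P : BroadcastProtocol Q M}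
  {ν : Type} [Fintype ν] [DecidableEq ν] {r : ℕ}

def snoc (ρ : LExec P ν r) (γ' : ν → Q) (v : ν) (m : M) (lost : Bool)
    (hbr : P.br (ρ.lastLab v) m (γ' v))
    (hlost : lost = true → ∀ w, w ≠ v → γ' w = ρ.lastLab w)
    (hreal : lost = false → ∀ w, w ≠ v →
      (ρ.E v w → P.rcv (ρ.lastLab w) m (γ' w)) ∧ (¬ ρ.E v w → γ' w = ρ.lastLab w)) :
    LExec P ν (r + 1) where
  lab := Fin.snoc ρ.lab γ'
  E := ρ.E
  E_symm := ρ.E_symm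
  E_irrefl := ρ.E_irrefl
  sender := Fin.snoc ρ.sender v
  msg := Fin.snoc ρ.msg m
  lost := Fin.snoc ρ.lost lost
  init w := by simpa only [← Fin.castSucc_zero, Fin.snoc_castSucc] using ρ.init w
  step_br i := by
    induction i using Fin.lastCases with
    | last => simpa [Fin.succ_last, LExec.lastLab] using hbr
    | cast j => simpa only [Fin.succ_castSucc, Fin.snoc_castSucc] using ρ.step_br j
  step_lost i := by
    induction i using Fin.lastCases with
    | last => simpa [Fin.succ_last, LExec.lastLab] using hlost
    | cast j => simpa only [Fin.succ_castSucc, Fin.snoc_castSucc] using ρ.step_lost j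
  step_real i := by
    induction i using Fin.lastCases with
    | last => simpa [Fin.succ_last, LExec.lastLab] using hreal
    | cast j => simpa only [Fin.succ_castSucc, Fin.snoc_castSucc] using ρ.step_real j

end LExec

def starAdj {ν : Type} (c v w : ν) : Prop := v ≠ w ∧ (v = c ∨ w = c)

lemma starAdj_symm {ν : Type} (c : ν) : Symmetric (starAdj c) :=
  fun _ _ ⟨hne, hc⟩ => ⟨hne.symm, hc.symm⟩

lemma starAdj_irrefl {ν : Type} (c : ν) : Irreflexive (starAdj c) :=
  fun _ h => h.1 rfl

namespace BroadcastProtocol.LossyReachable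

variable {Q M : Type} [Fintype Q] [DecidableEq Q] [Fintype M] {P : BroadcastProtocol Q M}
  {ν : Type} {E : ν → ν → Prop} {γ γ' : ν → Q} {c : ν} {m : M}

theorem exists_lexec [Fintype ν] [DecidableEq ν] (hsymm : Symmetric E) (hirr : Irreflexive E)
    (h : P.LossyReachable E γ) : ∃ r, ∃ ρ : LExec P ν r, ρ.E = E ∧ ρ.lastLab = γ := by
  induction h with
  | @init γ hI =>
    exact ⟨0, ⟨fun _ => γ, E, hsymm, hirr, Fin.elim0, Fin.elim0, Fin.elim0, hI,
      (·.elim0), (·.elim0), (·.elim0)⟩, rfl, rfl⟩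
  | @step γ γ' _ hstep ih =>
    obtain ⟨r, ρ, rfl, rfl⟩ := ih
    obtain ⟨v, m, hbr, hdeliv⟩ := hstep
    obtain ⟨lost, hlost, hreal⟩ : ∃ lost : Bool,
        (lost = true → ∀ w, w ≠ v → γ' w = ρ.lastLab w) ∧
        (lost = false → ∀ w, w ≠ v → (ρ.E v w → P.rcv (ρ.lastLab w) m (γ' w)) ∧
          (¬ ρ.E v w → γ' w = ρ.lastLab w)) := by
      rcases hdeliv with h | h
      exacts [⟨true, fun _ => h, nofun⟩, ⟨false, nofun, fun _ => h⟩]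
    exact ⟨r + 1, ρ.snoc γ' v m lost hbr hlost hreal, rfl,
      Fin.snoc_last (α := fun _ => ν → Q) _ _⟩

theorem lost_broadcast [DecidableEq ν] (h : P.LossyReachable E γ) {v : ν} {m : M} {q : Q}
    (hbr : P.br (γ v) m q) : P.LossyReachable E (Function.update γ v q) :=
  h.step ⟨v, m, by simpa using hbr, Or.inl fun w hw => by simp [hw]⟩

theorem lost_broadcasts [Finite ν] (h : P.LossyReachable E γ)
    (hγ' : ∀ v, γ' v = γ v ∨ ∃ m, P.br (γ v) m (γ' v)) : P.LossyReachable E γ' := by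
  classical
  cases nonempty_fintype ν
  suffices ∀ S : Finset ν, ∀ δ : ν → Q, (∀ v ∉ S, δ v = γ v) →
      (∀ v, δ v = γ v ∨ ∃ m, P.br (γ v) m (δ v)) → P.LossyReachable E δ from
    this Finset.univ γ' (by simp) hγ'
  intro S
  induction S using Finset.induction_on with
  | empty => intro δ hout _; simpa [show δ = γ from funext fun v => hout v (by simp)]
  | insert a S _ ih =>
    intro δ hout hδ
    have hprev : P.LossyReachable E (Function.update δ a (γ a)) := by
      refine ih _ (fun v hv => ?_) (fun v => ?_) <;> by_cases hva : v = a
      · simp [hva]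
      · simpa [hva] using hout v (by simp [hva, hv])
      · simp [hva]
      · simpa [hva] using hδ v
    rcases hδ a with ha | ⟨m, ha⟩
    · simpa [← ha] using hprev
    · simpa using hprev.lost_broadcast (v := a) (m := m) (q := δ a) (by simpa using ha)

theorem center_broadcast (h : P.LossyReachable (starAdj c) γ) (hbr : P.br (γ c) m (γ' c))
    (hrcv : ∀ w, w ≠ c → P.rcv (γ w) m (γ' w)) : P.LossyReachable (starAdj c) γ' :=
  h.step ⟨c, m, hbr, Or.inr fun w hw =>
    ⟨fun _ => hrcv w hw, fun hE => absurd ⟨hw.symm, Or.inl rfl⟩ hE⟩⟩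

theorem leaf_broadcast (h : P.LossyReachable (starAdj c) γ) {v : ν} (hv : v ≠ c)
    (hbr : P.br (γ v) m (γ' v)) (hrcv : P.rcv (γ c) m (γ' c))
    (hrest : ∀ w, w ≠ v → w ≠ c → γ' w = γ w) : P.LossyReachable (starAdj c) γ' := by
  refine h.step ⟨v, m, hbr, Or.inr fun w hw => ⟨fun hE => ?_, fun hE => hrest w hw ?_⟩⟩
  · obtain rfl : w = c := hE.2.resolve_left hv
    exact hrcv
  · rintro rfl
    exact hE ⟨hw.symm, Or.inr rfl⟩

end BroadcastProtocol.LossyReachable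

namespace PnProt

variable {n : ℕ}

lemma br_a : (PnProt n).br (.inl 0) none (.inl 0) := by
  simp [PnProt, PnBr]

lemma br_b {k k' : Fin (2 * n + 1)} (i : Fin n) (hk : (k : ℕ) = 2 * i + 1)
    (hk' : (k' : ℕ) = 2 * i + 2) : (PnProt n).br (.inl k) (some i) (.inl k') :=
  ⟨hk, by omega, by simp [Fin.ext_iff, hk, hk']⟩

lemma rcv_a_of_even {k k' : Fin (2 * n + 1)} (heven : (k : ℕ) % 2 = 0) (hk : (k : ℕ) < 2 * n)
    (hk' : (k' : ℕ) = k + 1) : (PnProt n).rcv (.inl k) none (.inl k') :=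
  Or.inl ⟨heven, hk, by simp [Fin.ext_iff, hk']⟩

lemma rcv_a_of_odd {k k' : Fin (2 * n + 1)} (hodd : (k : ℕ) % 2 = 1) (hk' : (k' : ℕ) = k) :
    (PnProt n).rcv (.inl k) none (.inl k') :=
  Or.inr ⟨by omega, by simp [Fin.ext_iff, hk']⟩

lemma rcv_b_first {i : Fin n} (hi : (i : ℕ) = 0) :
    (PnProt n).rcv (.inl 0) (some i) (.inr (.inl i)) :=
  Or.inr (Or.inl ⟨rfl, hi, by simp [Fin.ext_iff, hi]⟩)

lemma rcv_b_next {i j : Fin n} (hij : (i : ℕ) = j + 1) :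
    (PnProt n).rcv (.inr (.inl j)) (some i) (.inr (.inl i)) :=
  Or.inl ⟨hij, by omega, by simp [Fin.ext_iff, hij]⟩

/-- Leaf `i` (node `i.succ`) has to end in `q_{2i+1}`, ready to broadcast `b_{i+1} = some i`. -/
def climbConfig (n t : ℕ) : Fin (n + 1) → PnQ n :=
  Fin.cons (.inl 0) fun i => .inl ⟨2 * min (i : ℕ) t + 1, by omega⟩

/-- The centre's state `.inr (.inl s)` is `r_{s+1}`: leaves `0, …, s` have broadcast their `b`
for real. -/
def countConfig (s : Fin n) : Fin (n + 1) → PnQ n :=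
  Fin.cons (.inr (.inl s)) fun i =>
    .inl ⟨if (i : ℕ) ≤ s then 2 * i + 2 else 2 * i + 1, by split <;> omega⟩

open BroadcastProtocol

lemma reachable_climbConfig_zero :
    (PnProt n).LossyReachable (starAdj 0) (climbConfig n 0) := by
  have hinit : (PnProt n).LossyReachable (starAdj 0) fun _ : Fin (n + 1) => .inl 0 :=
    .init fun _ => Finset.mem_singleton_self _
  refine hinit.center_broadcast br_a fun w hw => ?_
  obtain ⟨i, rfl⟩ := Fin.exists_succ_eq.2 hw
  exact rcv_a_of_even (by simp) (by simp; omega) (by simp)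

lemma reachable_climbConfig_succ {t : ℕ}
    (h : (PnProt n).LossyReachable (starAdj 0) (climbConfig n t)) :
    (PnProt n).LossyReachable (starAdj 0) (climbConfig n (t + 1)) := by
  -- the leaves beyond `t` broadcast `b_{t+1}` into the void, then the centre broadcasts `a`
  let δ : Fin (n + 1) → PnQ n := Fin.cons (.inl 0) fun i =>
    .inl ⟨if t < i then 2 * t + 2 else 2 * i + 1, by split <;> omega⟩
  have hδ : (PnProt n).LossyReachable (starAdj 0) δ := by
    refine h.lost_broadcasts (Fin.cases (Or.inl rfl) fun i => ?_)
    by_cases hi : t < i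
    · exact Or.inr ⟨some ⟨t, by omega⟩, br_b _ (by simp; omega) (by simp [hi])⟩
    · exact Or.inl (by simp [δ, climbConfig, hi]; omega)
  refine hδ.center_broadcast br_a fun w hw => ?_
  obtain ⟨i, rfl⟩ := Fin.exists_succ_eq.2 hw
  by_cases hi : t < i
  · exact rcv_a_of_even (by simp [hi]) (by simp [hi]; omega) (by simp [hi]; omega)
  · exact rcv_a_of_odd (by simp [hi]) (by simp [hi]; omega)

lemma reachable_climbConfig (t : ℕ) :
    (PnProt n).LossyReachable (starAdj 0) (climbConfig n t) := by
  induction t with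
  | zero => exact reachable_climbConfig_zero
  | succ t ih => exact reachable_climbConfig_succ ih

lemma reachable_countConfig (s : ℕ) (hs : s < n) :
    (PnProt n).LossyReachable (starAdj 0) (countConfig ⟨s, hs⟩) := by
  induction s with
  | zero =>
    refine (reachable_climbConfig n).leaf_broadcast (v := Fin.succ ⟨0, hs⟩) (Fin.succ_ne_zero _)
      (br_b _ (by simp) (by simp)) (rcv_b_first rfl) fun w hw hw0 => ?_
    obtain ⟨i, rfl⟩ := Fin.exists_succ_eq.2 hw0
    have : (i : ℕ) ≠ 0 := by simpa [Fin.ext_iff] using hw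
    simpa [countConfig, climbConfig] using this
  | succ s ih =>
    refine (ih (by omega)).leaf_broadcast (v := Fin.succ ⟨s + 1, hs⟩) (Fin.succ_ne_zero _)
      (br_b _ (by simp) (by simp)) (rcv_b_next rfl) fun w hw hw0 => ?_
    obtain ⟨i, rfl⟩ := Fin.exists_succ_eq.2 hw0
    have : (i : ℕ) ≠ s + 1 := by simpa [Fin.ext_iff] using hw
    simp only [countConfig, Fin.cons_succ, Sum.inl.injEq, Fin.mk.injEq]
    split_ifs <;> omega

end PnProt

/-- **Optimality of the lossy lower bound.** For every `n ≥ 1` there is a lossy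
execution of `P_n` covering `{☺}` with exactly `n + 1` nodes, whose static
communication topology is the star in which one designated node `cn` is connected
exactly to each of the other `n` nodes. -/
theorem lossy_cover_with_star_topology (n : ℕ) (hn : 1 ≤ n) :
    ∃ (r : ℕ) (ρ : LExec (PnProt n) (Fin (n + 1)) r) (cn : Fin (n + 1)),
      (∀ v w, ρ.E v w ↔ (v ≠ w ∧ (v = cn ∨ w = cn))) ∧
      ρ.Covers {PnSmiley n hn} := by
  have hreach := PnProt.reachable_countConfig (n := n) (n - 1) (by omega)
  obtain ⟨r, ρ, hE, hlast⟩ := hreach.exists_lexec (starAdj_symm 0) (starAdj_irrefl 0)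
  refine ⟨r, ρ, 0, fun v w => by rw [hE]; rfl, 0, ?_⟩
  show ρ.lastLab 0 = _
  rw [hlast]
  rfl
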